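/- Let G be a twin-free, triangle-free cubic graph, and let S ⊆ V(G) be such that (a) any two distinct vertices of V(G)−S have distance at least 4, and (b) for any 4-cycle p a q b in G and any two vertices p', q' in (N(p) ∪ N(q)) − {p,a,q,b}, at most one of p', q' lies outside S. Then S is an error-correcting identifying code for G. -/

import Mathlib

open SimpleGraph

variable {V : Type*}

/-- Closed neighborhood of `v` in `G`. -/
def closedNbhd (G : SimpleGraph V) (v : V) : Set V := insert v (G.neighborSet v)

/-- `S` is an error-correcting identifying code for `G`: every vertex is 3-dominated
and every pair of distinct vertices is 3-distinguished. -/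
def IsErrIC (G : SimpleGraph V) (S : Set V) : Prop :=
  (∀ v : V, 3 ≤ (closedNbhd G v ∩ S).ncard) ∧
  ∀ u v : V, u ≠ v → 3 ≤ (symmDiff (closedNbhd G u ∩ S) (closedNbhd G v ∩ S)).ncard

/-- `G` has no closed twins and no open twins. -/
def TwinFree (G : SimpleGraph V) : Prop :=
  ∀ u v : V, u ≠ v →
    closedNbhd G u ≠ closedNbhd G v ∧ G.neighborSet u ≠ G.neighborSet v

/-!
Vertices outside `S` are pairwise at distance at least `4`, so a closed neighbourhood, or the
union `N[u] ∪ N[v]` for adjacent `u`, `v`, contains at most one of them; this gives domination.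
For `u ≠ v` we have `|N[u] ∆ N[v]| = 8 - 2 |N[u] ∩ N[v]|`, and `|N[u] ∩ N[v]| ≤ 2` because `G`
is triangle-free and has no open twins. If the intersection has at most one vertex, the symmetric
difference has at least six vertices, at most two of them outside `S`. If it has exactly two,
either `u` and `v` are adjacent, or `u a v b` is a 4-cycle; in both cases the distance condition,
helped by condition (b) for the two outer neighbours, leaves at most one vertex of `N[u] ∆ N[v]`
outside `S`.
-/

open scoped symmDiff

theorem Set.Subsingleton.ncard_le_one {α : Type*} {s : Set α} (h : s.Subsingleton) :
    s.ncard ≤ 1 :=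
  (Set.ncard_le_one h.finite).2 h

theorem Set.ncard_symmDiff_add_two_mul_ncard_inter {α : Type*} {s t : Set α}
    (hs : s.Finite) (ht : t.Finite) :
    (s ∆ t).ncard + 2 * (s ∩ t).ncard = s.ncard + t.ncard := by
  rw [symmDiff_eq_sup_sdiff_inf, ← Set.ncard_union_add_ncard_inter s t hs ht, two_mul,
    ← add_assoc]
  exact congrArg (· + _) (Set.ncard_sdiff_add_ncard_of_subset
    (Set.inter_subset_left.trans Set.subset_union_left) (hs.union ht))

section ClosedNbhd

variable {G : SimpleGraph V} {u v x y : V}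

@[simp]
theorem mem_closedNbhd_iff : x ∈ closedNbhd G v ↔ x = v ∨ G.Adj v x := Iff.rfl

theorem self_mem_closedNbhd (v : V) : v ∈ closedNbhd G v := Set.mem_insert v _

theorem mem_closedNbhd_comm : x ∈ closedNbhd G v ↔ v ∈ closedNbhd G x := by
  simp only [mem_closedNbhd_iff, eq_comm, G.adj_comm]

theorem closedNbhd_finite (h : (G.neighborSet v).Finite) : (closedNbhd G v).Finite :=
  h.insert v

theorem ncard_closedNbhd (h : (G.neighborSet v).Finite) :
    (closedNbhd G v).ncard = (G.neighborSet v).ncard + 1 :=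
  Set.ncard_insert_of_notMem G.notMem_neighborSet_self h

theorem edist_le_one_of_mem_closedNbhd (h : y ∈ closedNbhd G x) : G.edist x y ≤ 1 := by
  rcases h with rfl | h
  · simp
  · exact (edist_eq_one_iff_adj.2 h).le

theorem edist_le_three_of_mem_closedNbhd (hx : x ∈ closedNbhd G u) (hv : v ∈ closedNbhd G u)
    (hy : y ∈ closedNbhd G v) : G.edist x y ≤ 3 :=
  calc G.edist x y ≤ G.edist x u + G.edist u v + G.edist v y :=
        G.edist_triangle.trans (add_le_add_left G.edist_triangle _)
    _ ≤ 1 + 1 + 1 := by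
        gcongr
        · exact edist_le_one_of_mem_closedNbhd (mem_closedNbhd_comm.1 hx)
        · exact edist_le_one_of_mem_closedNbhd hv
        · exact edist_le_one_of_mem_closedNbhd hy
    _ = 3 := by norm_num

end ClosedNbhd

section Code

/-- Condition (a) of the theorem. -/
def FarApartOutside (G : SimpleGraph V) (S : Set V) : Prop :=
  ∀ u v : V, u ∉ S → v ∉ S → u ≠ v → 4 ≤ G.edist u v

/-- Condition (b) of the theorem. -/
def FourCycleCondition (G : SimpleGraph V) (S : Set V) : Prop :=
  ∀ p a q b : V, G.Adj p a → G.Adj a q → G.Adj q b → G.Adj b p →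
    p ≠ q → a ≠ b →
    ∀ p' q' : V, p' ∈ (G.neighborSet p ∪ G.neighborSet q) \ ({p, a, q, b} : Set V) →
      q' ∈ (G.neighborSet p ∪ G.neighborSet q) \ ({p, a, q, b} : Set V) →
      p' ≠ q' → p' ∈ S ∨ q' ∈ S

variable {G : SimpleGraph V} {S : Set V} {u v x y : V}

theorem eq_of_notMem_of_edist_le_three (hdist : FarApartOutside G S)
    (hx : x ∉ S) (hy : y ∉ S) (h : G.edist x y ≤ 3) : x = y := by
  by_contra hne
  exact absurd ((hdist x y hx hy hne).trans h) (by norm_num)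

theorem subsingleton_closedNbhd_diff (hdist : FarApartOutside G S) (v : V) :
    (closedNbhd G v \ S).Subsingleton := fun _ hx _ hy =>
  eq_of_notMem_of_edist_le_three hdist hx.2 hy.2
    (edist_le_three_of_mem_closedNbhd hx.1 (self_mem_closedNbhd v) hy.1)

theorem ncard_symmDiff_closedNbhd_diff_le_two (hdist : FarApartOutside G S) (u v : V) :
    (closedNbhd G u ∆ closedNbhd G v \ S).ncard ≤ 2 := by
  have hu := subsingleton_closedNbhd_diff hdist u
  have hv := subsingleton_closedNbhd_diff hdist v
  have hsub :
      closedNbhd G u ∆ closedNbhd G v \ S ⊆ (closedNbhd G u \ S) ∪ (closedNbhd G v \ S) :=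
    fun x ⟨hx, hxS⟩ => hx.imp (fun h => ⟨h.1, hxS⟩) (fun h => ⟨h.1, hxS⟩)
  calc _ ≤ ((closedNbhd G u \ S) ∪ (closedNbhd G v \ S)).ncard :=
        Set.ncard_le_ncard hsub (hu.finite.union hv.finite)
    _ ≤ (closedNbhd G u \ S).ncard + (closedNbhd G v \ S).ncard := Set.ncard_union_le _ _
    _ ≤ 2 := by linarith [hu.ncard_le_one, hv.ncard_le_one]

theorem ncard_inter_closedNbhd_le_two (hreg : ∀ v : V, (G.neighborSet v).ncard = 3)
    (htwin : TwinFree G) (htri : G.CliqueFree 3) (huv : u ≠ v) :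
    (closedNbhd G u ∩ closedNbhd G v).ncard ≤ 2 := by
  by_cases hadj : G.Adj u v
  · have hsub : closedNbhd G u ∩ closedNbhd G v ⊆ {u, v} := by
      rintro x ⟨rfl | hux, rfl | hvx⟩
      · exact Or.inl rfl
      · exact Or.inl rfl
      · exact Or.inr rfl
      · classical
        exact (htri {u, v, x} (is3Clique_triple_iff.2 ⟨hadj, hux, hvx⟩)).elim
    exact (Set.ncard_le_ncard hsub).trans (Set.ncard_pair huv).le
  · have hsub : closedNbhd G u ∩ closedNbhd G v ⊆ G.neighborSet u ∩ G.neighborSet v := by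
      rintro x ⟨rfl | hux, rfl | hvx⟩
      · exact (huv rfl).elim
      · exact (hadj hvx.symm).elim
      · exact (hadj hux).elim
      · exact ⟨hux, hvx⟩
    have hfin : ∀ w, (G.neighborSet w).Finite := fun w =>
      Set.finite_of_ncard_ne_zero (by rw [hreg]; norm_num)
    -- twin-freeness forbids `N(u) ⊆ N(v)`, as both have three elements
    have hssub : G.neighborSet u ∩ G.neighborSet v ⊂ G.neighborSet u :=
      Set.inter_subset_left.ssubset_of_not_subset fun h => (htwin u v huv).2
        (Set.eq_of_subset_of_ncard_le (h.trans Set.inter_subset_right)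
          (by rw [hreg, hreg]) (hfin v))
    have hlt := Set.ncard_lt_ncard hssub (hfin u)
    rw [hreg] at hlt
    linarith [Set.ncard_le_ncard hsub ((hfin u).inter_of_left _)]

theorem eq_of_mem_closedNbhd_diff_of_ncard_inter_eq_two (hdist : FarApartOutside G S)
    (hrival : FourCycleCondition G S) (huv : u ≠ v)
    (hk : (closedNbhd G u ∩ closedNbhd G v).ncard = 2)
    (hx : x ∈ closedNbhd G u \ closedNbhd G v) (hy : y ∈ closedNbhd G v \ closedNbhd G u)
    (hxS : x ∉ S) (hyS : y ∉ S) : x = y := by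
  by_cases hadj : G.Adj u v
  · exact eq_of_notMem_of_edist_le_three hdist hxS hyS
      (edist_le_three_of_mem_closedNbhd hx.1 (Or.inr hadj) hy.1)
  -- otherwise `u a v b` is a 4-cycle through the two common neighbours `a`, `b`
  obtain ⟨a, b, hab, hAB⟩ := Set.ncard_eq_two.1 hk
  have hcommon : ∀ c ∈ closedNbhd G u ∩ closedNbhd G v, G.Adj u c ∧ G.Adj v c := by
    rintro c ⟨rfl | huc, rfl | hvc⟩
    · exact (huv rfl).elim
    · exact (hadj hvc.symm).elim
    · exact (hadj huc).elim
    · exact ⟨huc, hvc⟩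
  have ha : a ∈ closedNbhd G u ∩ closedNbhd G v := hAB ▸ Or.inl rfl
  have hb : b ∈ closedNbhd G u ∩ closedNbhd G v := hAB ▸ Or.inr rfl
  obtain ⟨hua, hva⟩ := hcommon a ha
  obtain ⟨hub, hvb⟩ := hcommon b hb
  rcases hx.1 with rfl | hux
  · exact eq_of_notMem_of_edist_le_three hdist hxS hyS
      (edist_le_three_of_mem_closedNbhd (Or.inr hua.symm) (Or.inr hva.symm) hy.1)
  rcases hy.1 with rfl | hvy
  · exact eq_of_notMem_of_edist_le_three hdist hxS hyS
      (edist_le_three_of_mem_closedNbhd hx.1 (Or.inr hua) (Or.inr hva.symm))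
  by_contra hne
  have hxmem : x ∈ (G.neighborSet u ∪ G.neighborSet v) \ ({u, a, v, b} : Set V) := by
    refine ⟨Or.inl hux, ?_⟩
    rintro (rfl | rfl | rfl | rfl)
    · exact G.irrefl hux
    · exact hx.2 ha.2
    · exact hx.2 (self_mem_closedNbhd _)
    · exact hx.2 hb.2
  have hymem : y ∈ (G.neighborSet u ∪ G.neighborSet v) \ ({u, a, v, b} : Set V) := by
    refine ⟨Or.inr hvy, ?_⟩
    rintro (rfl | rfl | rfl | rfl)
    · exact hy.2 (self_mem_closedNbhd _)
    · exact hy.2 ha.1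
    · exact G.irrefl hvy
    · exact hy.2 hb.1
  exact (hrival u a v b hua hva.symm hvb hub.symm huv hab x y hxmem hymem hne).elim hxS hyS

theorem ncard_symmDiff_closedNbhd_diff_le_one_of_ncard_inter_eq_two (hdist : FarApartOutside G S)
    (hrival : FourCycleCondition G S) (huv : u ≠ v)
    (hk : (closedNbhd G u ∩ closedNbhd G v).ncard = 2) :
    (closedNbhd G u ∆ closedNbhd G v \ S).ncard ≤ 1 := by
  have hk' : (closedNbhd G v ∩ closedNbhd G u).ncard = 2 := by rwa [Set.inter_comm]
  refine Set.Subsingleton.ncard_le_one ?_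
  rintro x ⟨hx | hx, hxS⟩ y ⟨hy | hy, hyS⟩
  · exact subsingleton_closedNbhd_diff hdist u ⟨hx.1, hxS⟩ ⟨hy.1, hyS⟩
  · exact eq_of_mem_closedNbhd_diff_of_ncard_inter_eq_two hdist hrival huv hk hx hy hxS hyS
  · exact eq_of_mem_closedNbhd_diff_of_ncard_inter_eq_two hdist hrival huv.symm hk' hx hy
      hxS hyS
  · exact subsingleton_closedNbhd_diff hdist v ⟨hx.1, hxS⟩ ⟨hy.1, hyS⟩

theorem closedNbhd_finite_and_ncard_eq_four
    (hreg : ∀ v : V, (G.neighborSet v).ncard = 3) (v : V) :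
    (closedNbhd G v).Finite ∧ (closedNbhd G v).ncard = 4 := by
  have hfin : (G.neighborSet v).Finite := Set.finite_of_ncard_ne_zero (by rw [hreg]; norm_num)
  exact ⟨closedNbhd_finite hfin, by rw [ncard_closedNbhd hfin, hreg]⟩

theorem three_le_ncard_closedNbhd_inter (hreg : ∀ v : V, (G.neighborSet v).ncard = 3)
    (hdist : FarApartOutside G S) (v : V) :
    3 ≤ (closedNbhd G v ∩ S).ncard := by
  obtain ⟨hfin, h4⟩ := closedNbhd_finite_and_ncard_eq_four hreg v
  have hsplit := Set.ncard_inter_add_ncard_sdiff_eq_ncard (closedNbhd G v) S hfin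
  have hout := (subsingleton_closedNbhd_diff hdist v).ncard_le_one
  omega

theorem three_le_ncard_symmDiff_closedNbhd_inter (hreg : ∀ v : V, (G.neighborSet v).ncard = 3)
    (htwin : TwinFree G) (htri : G.CliqueFree 3) (hdist : FarApartOutside G S)
    (hrival : FourCycleCondition G S) (huv : u ≠ v) :
    3 ≤ ((closedNbhd G u ∩ S) ∆ (closedNbhd G v ∩ S)).ncard := by
  obtain ⟨hfu, hu⟩ := closedNbhd_finite_and_ncard_eq_four hreg u
  obtain ⟨hfv, hv⟩ := closedNbhd_finite_and_ncard_eq_four hreg v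
  have hD := Set.ncard_symmDiff_add_two_mul_ncard_inter hfu hfv
  have hsplit := Set.ncard_inter_add_ncard_sdiff_eq_ncard _ S (hfu.symmDiff hfv)
  rw [← Set.inter_symmDiff_distrib_right]
  rcases (ncard_inter_closedNbhd_le_two hreg htwin htri huv).lt_or_eq with hk | hk
  · have hout := ncard_symmDiff_closedNbhd_diff_le_two hdist u v
    omega
  · have hout := ncard_symmDiff_closedNbhd_diff_le_one_of_ncard_inter_eq_two hdist hrival huv hk
    omega

end Code

theorem stmt16 (G : SimpleGraph V)
    (hreg : ∀ v : V, (G.neighborSet v).ncard = 3)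
    (htwin : TwinFree G) (htri : G.CliqueFree 3) (S : Set V)
    (hdist : ∀ u v : V, u ∉ S → v ∉ S → u ≠ v → 4 ≤ G.edist u v)
    (hrival : ∀ p a q b : V, G.Adj p a → G.Adj a q → G.Adj q b → G.Adj b p →
      p ≠ q → a ≠ b →
      ∀ p' q' : V, p' ∈ (G.neighborSet p ∪ G.neighborSet q) \ ({p, a, q, b} : Set V) →
        q' ∈ (G.neighborSet p ∪ G.neighborSet q) \ ({p, a, q, b} : Set V) →
        p' ≠ q' → p' ∈ S ∨ q' ∈ S) :
    IsErrIC G S :=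
  ⟨three_le_ncard_closedNbhd_inter hreg hdist,
    fun _ _ huv => three_le_ncard_symmDiff_closedNbhd_inter hreg htwin htri hdist hrival huv⟩
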